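/- Let g ∈ L¹_{loc}(ℝ≥0) be nonnegative with ∫ₜ^{t+1} g(s) ds ≤ Cε for all t ≥ 0, and let y : ℝ≥0 → ℝ≥0 be absolutely continuous satisfying y'(t) + (κ − g(t))·y(t) ≤ M for a.e. t ≥ 0, where κ > 0, M ≥ 0. If Cε < κ/2, then y(t) ≤ e^{Cε}·( y(0)·e^{−(κ−Cε)t} + M·e^{Cε}·∫₀ᵗ e^{−(κ−Cε)(t−s)} ds ), and in particular y(t) ≤ C'·(y(0)·e^{−κt/2} + M) for a constant C' depending only on Cε and κ. -/

import Mathlib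

/-!
Multiplying by `exp (κ t)` turns the hypothesis into `v' ≤ M e^{κt} + g v` with `g ≥ 0`, which
Gronwall's integrating factor `exp (∫ₛᵗ g)` solves. As `g` is only locally integrable, this factor
is merely absolutely continuous, so the comparison goes through the fundamental theorem of calculus
for absolutely continuous functions. The unit-interval bound gives `∫ₛᵗ g ≤ Cε (t - s) + Cε`, so the
kernel `exp (∫ₛᵗ g - κ (t - s))` is at most `e^{Cε} e^{-(κ - Cε)(t - s)}`, and `κ - Cε > κ / 2`.
-/

open MeasureTheory Set Filter Real

theorem sub_le_integral_of_hasDeriv_right_of_ae_le {f f' φ : ℝ → ℝ} {a b : ℝ} (hab : a ≤ b)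
    (hcont : ContinuousOn f (Icc a b))
    (hderiv : ∀ x ∈ Ioo a b, HasDerivWithinAt f (f' x) (Ioi x) x)
    (hφ : IntervalIntegrable φ volume a b) (hle : ∀ᵐ x, x ∈ Icc a b → f' x ≤ φ x) :
    f b - f a ≤ ∫ x in a..b, φ x := by
  -- `max f' φ` dominates `f'` everywhere and agrees with `φ` almost everywhere.
  have hmax : (fun x ↦ max (f' x) (φ x)) =ᵐ[volume.restrict (Icc a b)] φ := by
    filter_upwards [(ae_restrict_iff' measurableSet_Icc).2 hle] with x hx using max_eq_right hx
  have hmax_int : IntegrableOn (fun x ↦ max (f' x) (φ x)) (Icc a b) :=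
    ((intervalIntegrable_iff_integrableOn_Icc_of_le hab).1 hφ).congr_fun_ae hmax.symm
  calc f b - f a ≤ ∫ x in a..b, max (f' x) (φ x) :=
        intervalIntegral.sub_le_integral_of_hasDeriv_right_of_le hab hcont hderiv hmax_int
          fun x _ ↦ le_max_left _ _
    _ = ∫ x in a..b, φ x := intervalIntegral.integral_congr_ae_restrict <|
        ae_restrict_of_ae_restrict_of_subset (uIoc_of_le hab ▸ Ioc_subset_Icc_self) hmax

theorem LocallyLipschitz.comp_absolutelyContinuousOnInterval {F Y : Type*}
    [SeminormedAddCommGroup F] [PseudoMetricSpace Y] {φ : F → Y} {f : ℝ → F} {a b : ℝ}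
    (hφ : LocallyLipschitz φ) (hf : AbsolutelyContinuousOnInterval f a b) :
    AbsolutelyContinuousOnInterval (φ ∘ f) a b := by
  obtain ⟨K, hK⟩ := hφ.locallyLipschitzOn.exists_lipschitzOnWith_of_compact
    (isCompact_uIcc.image_of_continuousOn hf.continuousOn)
  refine squeeze_zero' (Eventually.of_forall fun _ ↦ Finset.sum_nonneg fun _ _ ↦ dist_nonneg) ?_
    (by simpa using Tendsto.const_mul (K : ℝ) hf)
  rw [eventually_inf_principal]
  filter_upwards with E hE
  rw [Finset.mul_sum]
  gcongr with i hi
  exact hK.dist_le_mul _ (mem_image_of_mem f (hE.1 i hi).1) _ (mem_image_of_mem f (hE.1 i hi).2)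

theorem AbsolutelyContinuousOnInterval.sub_le_integral_of_ae_deriv_le {f φ : ℝ → ℝ} {a b : ℝ}
    (hab : a ≤ b) (hf : AbsolutelyContinuousOnInterval f a b)
    (hφ : IntervalIntegrable φ volume a b) (hle : ∀ᵐ x, x ∈ Icc a b → deriv f x ≤ φ x) :
    f b - f a ≤ ∫ x in a..b, φ x := by
  rw [← hf.integral_deriv_eq_sub]
  exact intervalIntegral.integral_mono_ae_restrict hab hf.intervalIntegrable_deriv hφ
    ((ae_restrict_iff' measurableSet_Icc).2 hle)

theorem le_exp_integral_mul_add_of_le_add_integral {u f g : ℝ → ℝ} {a b : ℝ} (hab : a ≤ b)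
    (hu : ContinuousOn u (Icc a b)) (hf : IntervalIntegrable f volume a b)
    (hg : IntervalIntegrable g volume a b) (hg0 : ∀ x ∈ Icc a b, 0 ≤ g x)
    (hle : ∀ t ∈ Icc a b, u t ≤ u a + ∫ s in a..t, (f s + g s * u s)) :
    u b ≤ exp (∫ s in a..b, g s) * u a + ∫ s in a..b, f s * exp (∫ r in s..b, g r) := by
  rw [← uIcc_of_le hab] at hu hg0 hle
  set Q : ℝ → ℝ := fun t ↦ u a + ∫ s in a..t, (f s + g s * u s)
  set H : ℝ → ℝ := fun t ↦ ∫ r in t..b, g r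
  have hH : H = fun t ↦ -∫ r in b..t, g r := funext fun t ↦ intervalIntegral.integral_symm b t
  have hfgu : IntervalIntegrable (fun s ↦ f s + g s * u s) volume a b :=
    hf.add (hg.mul_continuousOn hu)
  have hQ_ac : AbsolutelyContinuousOnInterval Q a b :=
    (contDiffOn_const (c := u a)).absolutelyContinuousOnInterval.fun_add
      (hfgu.absolutelyContinuousOnInterval_intervalIntegral left_mem_uIcc)
  have hH_ac : AbsolutelyContinuousOnInterval H a b := by
    rw [hH]
    exact (hg.absolutelyContinuousOnInterval_intervalIntegral right_mem_uIcc).fun_neg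
  -- Since `u ≤ Q` and `g ≥ 0`, `(Q e^H)' = (f + g u - g Q) e^H ≤ f e^H` wherever `Q' = f + g u`
  -- and `H' = -g`, which by Lebesgue differentiation is almost everywhere.
  have hderiv : ∀ᵐ x, x ∈ Icc a b → deriv (fun t ↦ Q t * exp (H t)) x ≤ f x * exp (H x) := by
    filter_upwards [hfgu.ae_hasDerivAt_integral, hg.ae_hasDerivAt_integral] with x hQx hHx hx
    rw [← uIcc_of_le hab] at hx
    have hH' : HasDerivAt H (-g x) x := hH ▸ (hHx hx b right_mem_uIcc).neg
    have hP : HasDerivAt (fun t ↦ Q t * exp (H t))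
        ((f x + g x * u x) * exp (H x) + Q x * (exp (H x) * -g x)) x :=
      ((hQx hx a left_mem_uIcc).const_add (u a)).mul hH'.exp
    rw [hP.deriv]
    have : g x * u x ≤ g x * Q x := mul_le_mul_of_nonneg_left (hle x hx) (hg0 x hx)
    nlinarith [exp_pos (H x)]
  have hint : IntervalIntegrable (fun x ↦ f x * exp (H x)) volume a b :=
    hf.mul_continuousOn (continuous_exp.comp_continuousOn hH_ac.continuousOn)
  have key := (hQ_ac.fun_mul (contDiff_exp.locallyLipschitz.comp_absolutelyContinuousOnInterval
    hH_ac)).sub_le_integral_of_ae_deriv_le hab hint hderiv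
  simp only [H, Q, Function.comp_apply, intervalIntegral.integral_same, exp_zero, mul_one] at key
  linarith [hle b right_mem_uIcc]

theorem le_exp_integral_mul_add_of_deriv_add_mul_le {u u' f g : ℝ → ℝ} {κ a b : ℝ} (hab : a ≤ b)
    (hu : ∀ x ∈ Icc a b, HasDerivAt u (u' x) x) (hf : IntervalIntegrable f volume a b)
    (hg : IntervalIntegrable g volume a b) (hg0 : ∀ x ∈ Icc a b, 0 ≤ g x)
    (hle : ∀ᵐ x, x ∈ Icc a b → u' x + (κ - g x) * u x ≤ f x) :
    u b ≤ exp ((∫ s in a..b, g s) - κ * (b - a)) * u a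
      + ∫ s in a..b, f s * exp ((∫ r in s..b, g r) - κ * (b - s)) := by
  set v : ℝ → ℝ := fun t ↦ u t * exp (κ * t)
  have hv : ∀ x ∈ Icc a b, HasDerivAt v ((u' x + κ * u x) * exp (κ * x)) x := fun x hx ↦
    ((hu x hx).fun_mul ((hasDerivAt_id' x).const_mul κ).exp).congr_deriv (by ring)
  have hv_cont : ContinuousOn v (Icc a b) := fun x hx ↦ (hv x hx).continuousAt.continuousWithinAt
  have hfe : IntervalIntegrable (fun s ↦ f s * exp (κ * s)) volume a b :=
    hf.mul_continuousOn (by fun_prop)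
  have hvle : ∀ t ∈ Icc a b, v t ≤ v a + ∫ s in a..t, (f s * exp (κ * s) + g s * v s) := by
    intro t ht
    have hint : IntervalIntegrable (fun s ↦ f s * exp (κ * s) + g s * v s) volume a t :=
      (hfe.add (hg.mul_continuousOn (uIcc_of_le hab ▸ hv_cont))).mono_set
        (uIcc_subset_uIcc_left (uIcc_of_le hab ▸ ht))
    have := sub_le_integral_of_hasDeriv_right_of_ae_le ht.1
      (hv_cont.mono (Icc_subset_Icc_right ht.2))
      (fun x hx ↦ (hv x ⟨hx.1.le, hx.2.le.trans ht.2⟩).hasDerivWithinAt) hint (by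
        filter_upwards [hle] with x hx hxt
        have := hx ⟨hxt.1, hxt.2.trans ht.2⟩
        have : 0 < exp (κ * x) := exp_pos _
        simp only [v]
        nlinarith)
    linarith
  have key := le_exp_integral_mul_add_of_le_add_integral hab hv_cont hfe hg hg0 hvle
  have e1 : exp ((∫ s in a..b, g s) - κ * (b - a)) * u a * exp (κ * b)
      = exp (∫ s in a..b, g s) * v a := by
    simp only [v, mul_sub, exp_sub]
    field_simp
  have e2 : (∫ s in a..b, f s * exp ((∫ r in s..b, g r) - κ * (b - s))) * exp (κ * b)
      = ∫ s in a..b, f s * exp (κ * s) * exp (∫ r in s..b, g r) := by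
    rw [← intervalIntegral.integral_mul_const]
    congr 1 with s
    simp only [mul_sub, exp_sub]
    field_simp
  refine le_of_mul_le_mul_right ?_ (exp_pos (κ * b))
  rw [add_mul, e1, e2]
  exact key

section UnitIntervals

variable {g : ℝ → ℝ} {a C : ℝ}

theorem intervalIntegrable_add_nat_of_forall_add_one
    (hg : ∀ t ≥ a, IntervalIntegrable g volume t (t + 1)) {s : ℝ} (hs : a ≤ s) (n : ℕ) :
    IntervalIntegrable g volume s (s + n) := by
  simpa using IntervalIntegrable.trans_iterate (a := fun k : ℕ ↦ s + k) fun k _ ↦ by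
    simpa [add_assoc] using hg (s + k) (le_add_of_le_of_nonneg hs k.cast_nonneg)

theorem intervalIntegrable_of_forall_add_one
    (hg : ∀ t ≥ a, IntervalIntegrable g volume t (t + 1)) {s t : ℝ} (hs : a ≤ s) (hst : s ≤ t) :
    IntervalIntegrable g volume s t :=
  (intervalIntegrable_add_nat_of_forall_add_one hg hs ⌈t - s⌉₊).mono_set <|
    uIcc_subset_uIcc left_mem_uIcc (mem_uIcc_of_le hst (by linarith [Nat.le_ceil (t - s)]))

theorem integral_le_mul_add_of_forall_integral_add_one_le (hg0 : ∀ t ≥ a, 0 ≤ g t)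
    (hg : ∀ t ≥ a, IntervalIntegrable g volume t (t + 1)) (hC : 0 ≤ C)
    (hgC : ∀ t ≥ a, ∫ r in t..t + 1, g r ≤ C) {s t : ℝ} (hs : a ≤ s) (hst : s ≤ t) :
    ∫ r in s..t, g r ≤ C * (t - s) + C := by
  set n := ⌊t - s⌋₊ + 1
  have ht : t ≤ s + n := by push_cast [n]; linarith [Nat.lt_floor_add_one (t - s)]
  calc ∫ r in s..t, g r ≤ ∫ r in s..s + n, g r :=
        intervalIntegral.integral_mono_interval le_rfl hst ht
          ((ae_restrict_iff' measurableSet_Ioc).2 (ae_of_all _ fun r hr ↦ hg0 r (hs.trans hr.1.le)))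
          (intervalIntegrable_add_nat_of_forall_add_one hg hs n)
    _ = ∑ k ∈ Finset.range n, ∫ r in s + k..s + (k + 1 : ℕ), g r := by
        rw [intervalIntegral.sum_integral_adjacent_intervals fun k _ ↦ ?_]
        · simp
        · simpa [add_assoc] using hg (s + k) (le_add_of_le_of_nonneg hs k.cast_nonneg)
    _ ≤ ∑ k ∈ Finset.range n, C := Finset.sum_le_sum fun k _ ↦ by
        simpa [add_assoc] using hgC (s + k) (le_add_of_le_of_nonneg hs k.cast_nonneg)
    _ ≤ C * (t - s) + C := by
        simp only [Finset.sum_const, Finset.card_range, nsmul_eq_mul, n]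
        push_cast
        nlinarith [Nat.floor_le (sub_nonneg.2 hst)]

end UnitIntervals

theorem integral_exp_neg_mul_sub_le {ν : ℝ} (hν : 0 < ν) (t : ℝ) :
    ∫ s in (0 : ℝ)..t, exp (-ν * (t - s)) ≤ 1 / ν := by
  have h := intervalIntegral.integral_comp_sub_left (fun x ↦ exp (-ν * x)) (a := 0) (b := t) t
  simp only [sub_self, sub_zero] at h
  rw [h, intervalIntegral.integral_comp_mul_left (fun x ↦ exp x) (neg_ne_zero.2 hν.ne'),
    integral_exp, smul_eq_mul, mul_zero, exp_zero, inv_neg, neg_mul, ← mul_neg, neg_sub,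
    inv_mul_eq_div]
  exact div_le_div_of_nonneg_right (by linarith [exp_pos (-ν * t)]) hν.le

theorem le_exp_mul_add_integral_of_perturbed_damping {κ M Cε : ℝ} (hM : 0 ≤ M) (hCε : 0 ≤ Cε)
    {g y y' : ℝ → ℝ} (hg : ∀ t ≥ (0 : ℝ), 0 ≤ g t)
    (hgint : ∀ t ≥ (0 : ℝ), IntervalIntegrable g volume t (t + 1))
    (hgbound : ∀ t ≥ (0 : ℝ), ∫ s in t..t + 1, g s ≤ Cε)
    (hy : ∀ t ≥ (0 : ℝ), HasDerivAt y (y' t) t) (hy0 : 0 ≤ y 0)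
    (hineq : ∀ᵐ t ∂(volume.restrict (Ici (0 : ℝ))), y' t + (κ - g t) * y t ≤ M)
    {t : ℝ} (ht : 0 ≤ t) :
    y t ≤ exp Cε * (y 0 * exp (-(κ - Cε) * t)
      + M * ∫ s in (0 : ℝ)..t, exp (-(κ - Cε) * (t - s))) := by
  have hgt := intervalIntegrable_of_forall_add_one hgint le_rfl ht
  have hexponent :
      ∀ s ∈ Icc 0 t, (∫ r in s..t, g r) - κ * (t - s) ≤ Cε + -(κ - Cε) * (t - s) :=
    fun s hs ↦ by
      linarith [integral_le_mul_add_of_forall_integral_add_one_le hg hgint hCε hgbound hs.1 hs.2]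
  have hineq' : ∀ᵐ x, x ∈ Icc 0 t → y' x + (κ - g x) * y x ≤ M := by
    filter_upwards [(ae_restrict_iff' measurableSet_Ici).1 hineq] with x hx hxt using hx hxt.1
  have hcont : ContinuousOn (fun s ↦ M * exp ((∫ r in s..t, g r) - κ * (t - s))) (uIcc 0 t) := by
    have hprim := intervalIntegral.continuousOn_primitive_interval_left
      ((intervalIntegrable_iff' (f := g)).1 hgt)
    fun_prop
  calc y t ≤ exp ((∫ s in (0 : ℝ)..t, g s) - κ * (t - 0)) * y 0
        + ∫ s in (0 : ℝ)..t, M * exp ((∫ r in s..t, g r) - κ * (t - s)) :=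
        le_exp_integral_mul_add_of_deriv_add_mul_le ht (fun x hx ↦ hy x hx.1)
          intervalIntegrable_const hgt (fun x hx ↦ hg x hx.1) hineq'
    _ ≤ exp (Cε + -(κ - Cε) * (t - 0)) * y 0
        + ∫ s in (0 : ℝ)..t, M * exp (Cε + -(κ - Cε) * (t - s)) := by
        refine add_le_add
          (mul_le_mul_of_nonneg_right (exp_le_exp.2 (hexponent 0 ⟨le_rfl, ht⟩)) hy0)
          (intervalIntegral.integral_mono_on ht hcont.intervalIntegrable
            (Continuous.intervalIntegrable (by fun_prop) _ _) fun s hs ↦ ?_)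
        exact mul_le_mul_of_nonneg_left (exp_le_exp.2 (hexponent s hs)) hM
    _ = _ := by
        simp only [sub_zero, exp_add, intervalIntegral.integral_const_mul]
        ring

theorem gronwall_perturbed_damping (κ M Cε : ℝ) (hκ : 0 < κ) (hM : 0 ≤ M)
    (hCε : 0 ≤ Cε) (hsmall : Cε < κ/2)
    (g : ℝ → ℝ) (hg : ∀ t ≥ (0:ℝ), 0 ≤ g t)
    (hgint : ∀ t ≥ (0:ℝ), IntervalIntegrable g volume t (t+1))
    (hgbound : ∀ t ≥ (0:ℝ), (∫ s in t..(t+1), g s) ≤ Cε)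
    (y y' : ℝ → ℝ) (hy : ∀ t ≥ (0:ℝ), HasDerivAt y (y' t) t)
    (hypos : ∀ t ≥ (0:ℝ), 0 ≤ y t)
    (hineq : ∀ᵐ t ∂(volume.restrict (Set.Ici (0:ℝ))), y' t + (κ - g t) * y t ≤ M) :
    (∀ t ≥ (0:ℝ), y t ≤ Real.exp Cε * (y 0 * Real.exp (-(κ - Cε)*t)
        + M * Real.exp Cε * ∫ s in (0:ℝ)..t, Real.exp (-(κ - Cε)*(t - s))))
    ∧ ∃ C' > (0:ℝ), ∀ t ≥ (0:ℝ), y t ≤ C' * (y 0 * Real.exp (-κ*t/2) + M) := by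
  have hy0 := hypos 0 le_rfl
  have bound := fun t (ht : 0 ≤ t) ↦
    le_exp_mul_add_integral_of_perturbed_damping hM hCε hg hgint hgbound hy hy0 hineq ht
  have hJ_nonneg : ∀ t ≥ (0 : ℝ), 0 ≤ ∫ s in (0 : ℝ)..t, exp (-(κ - Cε) * (t - s)) :=
    fun t ht ↦ intervalIntegral.integral_nonneg ht fun _ _ ↦ (exp_pos _).le
  have hJ_le : ∀ t, ∫ s in (0 : ℝ)..t, exp (-(κ - Cε) * (t - s)) ≤ 2 / κ := fun t ↦
    (integral_exp_neg_mul_sub_le (by linarith) t).trans <| by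
      rw [div_le_div_iff₀ (by linarith) hκ]
      linarith
  refine ⟨fun t ht ↦ (bound t ht).trans ?_, exp Cε * (1 + 2 / κ), by positivity,
    fun t ht ↦ (bound t ht).trans ?_⟩
  · gcongr exp Cε * (_ + ?_)
    exact mul_le_mul_of_nonneg_right (le_mul_of_one_le_right hM (one_le_exp hCε)) (hJ_nonneg t ht)
  · have hdecay : exp (-(κ - Cε) * t) ≤ exp (-κ * t / 2) := exp_le_exp.2 (by nlinarith)
    calc exp Cε * (y 0 * exp (-(κ - Cε) * t) + M * ∫ s in (0 : ℝ)..t, exp (-(κ - Cε) * (t - s)))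
        ≤ exp Cε * (y 0 * exp (-κ * t / 2) + M * (2 / κ)) := by gcongr; exact hJ_le t
      _ ≤ exp Cε * (1 + 2 / κ) * (y 0 * exp (-κ * t / 2) + M) := by
        rw [mul_assoc]
        gcongr
        have : 0 ≤ y 0 * exp (-κ * t / 2) * (2 / κ) := by positivity
        nlinarith
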